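/- arXiv:2406.11810 — 4 statements merged into one kernel-verified Lean document; each statement's English description precedes it below -/
import Mathlib

section
/- Let {φ_i}_{i=1}^m ⊆ ℝ^d with nonnegative weights ρ_i, and let P be an orthogonal projection matrix. Suppose Λ' = Σᵢ ρᵢ (Pφᵢ(Pφᵢ)ᵀ + (I−P)φᵢ((I−P)φᵢ)ᵀ) is invertible and Λ = Σᵢ ρᵢ φᵢφᵢᵀ is invertible. Then for any vector v, ‖v‖_{Λ'⁻¹} ≤ √2 · ‖v‖_{Λ⁻¹}, where ‖v‖_M = √(vᵀMv). -/
open Matrix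

variable {n : Type*} [Fintype n] [DecidableEq n]

lemma symmDot {M : Matrix n n ℝ} (hM : Mᵀ = M) (x y : n → ℝ) :
    x ⬝ᵥ M *ᵥ y = (M *ᵥ x) ⬝ᵥ y := by
  rw [dotProduct_mulVec, ← mulVec_transpose, hM]

open scoped MatrixOrder in
lemma cs_psd {A : Matrix n n ℝ} (hA : A.PosSemidef) (x y : n → ℝ) :
    (x ⬝ᵥ A *ᵥ y) ^ 2 ≤ (x ⬝ᵥ A *ᵥ x) * (y ⬝ᵥ A *ᵥ y) := by
  set S := CFC.sqrt A with hS
  have hSS : S * S = A := CFC.sqrt_mul_sqrt_self A hA.nonneg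
  have hSH : Sᵀ = S := (CFC.sqrt_nonneg A).posSemidef.1
  have key : ∀ z w : n → ℝ, z ⬝ᵥ A *ᵥ w = (S *ᵥ z) ⬝ᵥ (S *ᵥ w) := by
    intro z w
    rw [← hSS, ← mulVec_mulVec, dotProduct_mulVec, ← mulVec_transpose, hSH]
  rw [key x y, key x x, key y y]
  have := Finset.sum_mul_sq_le_sq_mul_sq Finset.univ (fun i => (S *ᵥ x) i) (fun i => (S *ᵥ y) i)
  simpa [dotProduct, sq] using this

lemma real_transpose_eq {M : Matrix n n ℝ} (h : M.IsHermitian) : Mᵀ = M := by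
  simpa using h.eq

lemma inv_quad_le {A B : Matrix n n ℝ} (hA : A.PosDef) (hB : B.PosDef) (c : ℝ) (hc : 0 ≤ c)
    (h : ∀ x, x ⬝ᵥ A *ᵥ x ≤ c * (x ⬝ᵥ B *ᵥ x)) (v : n → ℝ) :
    v ⬝ᵥ B⁻¹ *ᵥ v ≤ c * (v ⬝ᵥ A⁻¹ *ᵥ v) := by
  have hAinv : (A⁻¹).PosDef := hA.inv
  have hBinv : (B⁻¹).PosDef := hB.inv
  have hAu : IsUnit A.det := hA.det_pos.ne'.isUnit
  have hBu : IsUnit B.det := hB.det_pos.ne'.isUnit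
  have hAT : Aᵀ = A := real_transpose_eq hA.1
  set y := B⁻¹ *ᵥ v with hy
  set z := A⁻¹ *ᵥ v with hz
  have hBy : B *ᵥ y = v := by
    rw [hy, mulVec_mulVec, mul_nonsing_inv _ hBu, one_mulVec]
  have hAz : A *ᵥ z = v := by
    rw [hz, mulVec_mulVec, mul_nonsing_inv _ hAu, one_mulVec]
  set t := v ⬝ᵥ B⁻¹ *ᵥ v with ht
  have htvy : t = v ⬝ᵥ y := rfl
  have ht0 : 0 ≤ t := by simpa using hBinv.posSemidef.dotProduct_mulVec_nonneg v
  have h1 : z ⬝ᵥ A *ᵥ y = t := by rw [symmDot hAT, hAz, htvy]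
  have hzAz : z ⬝ᵥ A *ᵥ z = v ⬝ᵥ A⁻¹ *ᵥ v := by
    rw [symmDot hAT, hAz, hz]
  have hcs : t ^ 2 ≤ (z ⬝ᵥ A *ᵥ z) * (y ⬝ᵥ A *ᵥ y) := h1 ▸ cs_psd hA.posSemidef z y
  have hyAy : y ⬝ᵥ A *ᵥ y ≤ c * t := by
    have hBT : Bᵀ = B := real_transpose_eq hB.1
    have : y ⬝ᵥ B *ᵥ y = t := by
      rw [symmDot hBT, hBy, htvy, dotProduct_comm]
    calc y ⬝ᵥ A *ᵥ y ≤ c * (y ⬝ᵥ B *ᵥ y) := h y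
    _ = c * t := by rw [this]
  have hq0 : 0 ≤ v ⬝ᵥ A⁻¹ *ᵥ v := by simpa using hAinv.posSemidef.dotProduct_mulVec_nonneg v
  have hyAy0 : 0 ≤ y ⬝ᵥ A *ᵥ y := by simpa using hA.posSemidef.dotProduct_mulVec_nonneg y
  rcases eq_or_lt_of_le ht0 with h0 | h0
  · rw [← h0]; exact mul_nonneg hc hq0
  · have key : t ^ 2 ≤ (v ⬝ᵥ A⁻¹ *ᵥ v) * (c * t) := by
      calc t ^ 2 ≤ (z ⬝ᵥ A *ᵥ z) * (y ⬝ᵥ A *ᵥ y) := hcs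
      _ ≤ (v ⬝ᵥ A⁻¹ *ᵥ v) * (c * t) := by
          rw [hzAz]; exact mul_le_mul_of_nonneg_left hyAy hq0
    nlinarith [key, h0]

lemma quad_sum {ι : Type*} (s : Finset ι) (M : ι → Matrix n n ℝ) (x : n → ℝ) :
    x ⬝ᵥ (∑ i ∈ s, M i) *ᵥ x = ∑ i ∈ s, x ⬝ᵥ M i *ᵥ x := by
  induction s using Finset.cons_induction with
  | empty => simp
  | cons i s hi ih => simp [Finset.sum_cons, add_mulVec, dotProduct_add, ih]

lemma quad_smul (c : ℝ) (M : Matrix n n ℝ) (x : n → ℝ) :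
    x ⬝ᵥ (c • M) *ᵥ x = c * (x ⬝ᵥ M *ᵥ x) := by
  rw [smul_mulVec, dotProduct_smul, smul_eq_mul]

lemma quad_vmv (a x : n → ℝ) : x ⬝ᵥ (vecMulVec a a) *ᵥ x = (a ⬝ᵥ x) ^ 2 := by
  simp only [dotProduct, mulVec, vecMulVec_apply, sq, Finset.mul_sum, Finset.sum_mul]
  exact Finset.sum_congr rfl fun i _ => Finset.sum_congr rfl fun j _ => by ring

lemma posDef_of_psd_det {M : Matrix n n ℝ} (h : M.PosSemidef) (hu : IsUnit M.det) :
    M.PosDef := by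
  refine posDef_iff_dotProduct_mulVec.mpr ⟨h.1, fun x hx => ?_⟩
  rcases (h.dotProduct_mulVec_nonneg x).lt_or_eq with hlt | heq
  · exact hlt
  · exfalso
    apply hx
    have h0 : M *ᵥ x = 0 := (h.dotProduct_mulVec_zero_iff x).mp heq.symm
    have : M⁻¹ *ᵥ (M *ᵥ x) = x := by
      rw [mulVec_mulVec, nonsing_inv_mul _ hu, one_mulVec]
    rw [← this, h0, mulVec_zero]

lemma psd_of_quad {M : Matrix n n ℝ} (hsymm : Mᵀ = M)
    (h : ∀ x, 0 ≤ x ⬝ᵥ M *ᵥ x) : M.PosSemidef := by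
  refine PosSemidef.of_dotProduct_mulVec_nonneg ?_ ?_
  · show Mᴴ = M
    simpa using hsymm
  · intro x
    simpa using h x

lemma vmv_transpose (a : n → ℝ) : (vecMulVec a a)ᵀ = vecMulVec a a := by
  ext i j; simp [vecMulVec_apply, mul_comm]

/-- If `Λ = Σᵢ ρᵢ φᵢφᵢᵀ` and `Λ' = Σᵢ ρᵢ (Pφᵢ(Pφᵢ)ᵀ + (I−P)φᵢ((I−P)φᵢ)ᵀ)` are both
invertible, then for every vector `v`, `‖v‖_{Λ'⁻¹} ≤ √2 ‖v‖_{Λ⁻¹}`. -/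
theorem inv_norm_split_projection (d m : ℕ) (φ : Fin m → (Fin d → ℝ)) (ρ : Fin m → ℝ)
    (hρ : ∀ i, 0 ≤ ρ i) (P : Matrix (Fin d) (Fin d) ℝ)
    (hPsymm : Pᵀ = P) (hPidem : P * P = P)
    (Λ Λ' : Matrix (Fin d) (Fin d) ℝ)
    (hΛ : Λ = ∑ i, ρ i • vecMulVec (φ i) (φ i))
    (hΛ' : Λ' = ∑ i, ρ i •
        (vecMulVec (P *ᵥ φ i) (P *ᵥ φ i) +
          vecMulVec ((1 - P) *ᵥ φ i) ((1 - P) *ᵥ φ i)))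
    (hΛinv : IsUnit Λ.det) (hΛ'inv : IsUnit Λ'.det)
    (v : Fin d → ℝ) :
    Real.sqrt (v ⬝ᵥ Λ'⁻¹ *ᵥ v) ≤ Real.sqrt 2 * Real.sqrt (v ⬝ᵥ Λ⁻¹ *ᵥ v) := by
  have qΛ : ∀ x, x ⬝ᵥ Λ *ᵥ x = ∑ i, ρ i * (φ i ⬝ᵥ x) ^ 2 := by
    intro x
    rw [hΛ, quad_sum]
    exact Finset.sum_congr rfl fun i _ => by rw [quad_smul, quad_vmv]
  have qΛ' : ∀ x, x ⬝ᵥ Λ' *ᵥ x =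
      ∑ i, ρ i * (((P *ᵥ φ i) ⬝ᵥ x) ^ 2 + (((1 - P) *ᵥ φ i) ⬝ᵥ x) ^ 2) := by
    intro x
    rw [hΛ', quad_sum]
    refine Finset.sum_congr rfl fun i _ => ?_
    rw [quad_smul]
    congr 1
    rw [add_mulVec, dotProduct_add, quad_vmv, quad_vmv]
  have hsplit : ∀ i, (P *ᵥ φ i) + ((1 - P) *ᵥ φ i) = φ i := by
    intro i
    rw [← add_mulVec]
    simp
  have hΛsymm : Λᵀ = Λ := by
    rw [hΛ, transpose_sum]
    exact Finset.sum_congr rfl fun i _ => by rw [transpose_smul, vmv_transpose]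
  have hΛ'symm : Λ'ᵀ = Λ' := by
    rw [hΛ', transpose_sum]
    refine Finset.sum_congr rfl fun i _ => ?_
    rw [transpose_smul, transpose_add, vmv_transpose, vmv_transpose]
  have hΛpsd : Λ.PosSemidef := psd_of_quad hΛsymm fun x => by
    rw [qΛ]
    exact Finset.sum_nonneg fun i _ => mul_nonneg (hρ i) (sq_nonneg _)
  have hΛ'psd : Λ'.PosSemidef := psd_of_quad hΛ'symm fun x => by
    rw [qΛ']
    exact Finset.sum_nonneg fun i _ =>
      mul_nonneg (hρ i) (add_nonneg (sq_nonneg _) (sq_nonneg _))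
  have hΛpos : Λ.PosDef := posDef_of_psd_det hΛpsd hΛinv
  have hΛ'pos : Λ'.PosDef := posDef_of_psd_det hΛ'psd hΛ'inv
  have hle : ∀ x, x ⬝ᵥ Λ *ᵥ x ≤ 2 * (x ⬝ᵥ Λ' *ᵥ x) := by
    intro x
    rw [qΛ, qΛ', Finset.mul_sum]
    refine Finset.sum_le_sum fun i _ => ?_
    have h1 : φ i ⬝ᵥ x = (P *ᵥ φ i) ⬝ᵥ x + ((1 - P) *ᵥ φ i) ⬝ᵥ x := by
      rw [← add_dotProduct, hsplit]
    rw [h1]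
    have := hρ i
    nlinarith [sq_nonneg ((P *ᵥ φ i) ⬝ᵥ x - ((1 - P) *ᵥ φ i) ⬝ᵥ x)]
  have key : v ⬝ᵥ Λ'⁻¹ *ᵥ v ≤ 2 * (v ⬝ᵥ Λ⁻¹ *ᵥ v) :=
    inv_quad_le hΛpos hΛ'pos 2 (by norm_num) hle v
  calc Real.sqrt (v ⬝ᵥ Λ'⁻¹ *ᵥ v) ≤ Real.sqrt (2 * (v ⬝ᵥ Λ⁻¹ *ᵥ v)) :=
        Real.sqrt_le_sqrt key
  _ = Real.sqrt 2 * Real.sqrt (v ⬝ᵥ Λ⁻¹ *ᵥ v) := Real.sqrt_mul (by norm_num) _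
end

section
/- Elliptical potential lemma (general version): Let x₁,…,x_T ∈ ℝ^d with ‖x_t‖₂ ≤ 1 for all t. Let Σ₁ be positive definite with all eigenvalues in [a, b] for some 0 < a ≤ b, and define Σ_{t+1} = Σ_t + x_t x_tᵀ. Then Σ_{t=1}^T min{1, x_tᵀ Σ_t⁻¹ x_t} ≤ 2d · log(b/a + T/(a·d)). -/
open Matrix

section EllipticalAux

variable {d : ℕ}

private lemma ep_min1_le (u : ℝ) (hu : 0 ≤ u) : min 1 u ≤ 2 * Real.log (1 + u) := by
  rcases le_total u 1 with h | h
  · rw [min_eq_right h]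
    have h1 : (0:ℝ) < 1 + u := by linarith
    have hlog : u / (1 + u) ≤ Real.log (1 + u) := by
      have h0 := Real.log_le_sub_one_of_pos (x := 1/(1+u)) (by positivity)
      rw [Real.log_div one_ne_zero (by linarith), Real.log_one] at h0
      have h3 : -(Real.log (1+u)) ≤ 1/(1+u) - 1 := by linarith
      have h2 : 1/(1+u) - 1 = -(u/(1+u)) := by field_simp; ring
      linarith [h2 ▸ h3]
    have : u / (1+u) ≥ u / 2 := by
      rw [ge_iff_le, div_le_div_iff₀ (by norm_num) h1]
      nlinarith
    linarith
  · rw [min_eq_left h]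
    have : Real.log 2 ≤ Real.log (1 + u) := by
      apply Real.log_le_log (by norm_num); linarith
    nlinarith [Real.log_two_gt_d9]

private lemma ep_psd_vmv (v : Fin d → ℝ) : (vecMulVec v v).PosSemidef := by
  have := posSemidef_self_mul_conjTranspose (replicateCol Unit v)
  rwa [conjTranspose_replicateCol, star_trivial, ← vecMulVec_eq] at this

private lemma ep_pd_smul_one (a : ℝ) (ha : 0 < a) :
    (a • (1 : Matrix (Fin d) (Fin d) ℝ)).PosDef := by
  rw [smul_one_eq_diagonal]
  exact posDef_diagonal_iff.2 fun _ => ha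

private lemma ep_trace_nonneg {M : Matrix (Fin d) (Fin d) ℝ} (hM : M.PosSemidef) :
    0 ≤ M.trace := by
  rw [Matrix.trace]
  apply Finset.sum_nonneg
  intro i _
  have := hM.dotProduct_mulVec_nonneg (Pi.single i 1)
  simpa [Matrix.diag, dotProduct, mulVec, Pi.single_apply] using this

private lemma ep_trace_vmv (v : Fin d → ℝ) : (vecMulVec v v).trace = ∑ i, v i ^ 2 := by
  simp [Matrix.trace, Matrix.diag, vecMulVec_apply, sq]

private lemma ep_trace_eq_sum_eigen {M : Matrix (Fin d) (Fin d) ℝ} (hM : M.IsHermitian) :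
    M.trace = ∑ i, hM.eigenvalues i := by
  simpa using hM.trace_eq_sum_eigenvalues

private lemma ep_eigen_lb {M : Matrix (Fin d) (Fin d) ℝ} (hM : M.IsHermitian) {a : ℝ}
    (h : (M - a • (1 : Matrix (Fin d) (Fin d) ℝ)).PosSemidef) (i : Fin d) :
    a ≤ hM.eigenvalues i := by
  have hv := hM.eigenvalues_eq i
  set v : Fin d → ℝ := ⇑(hM.eigenvectorBasis i) with hvdef
  have hnorm : v ⬝ᵥ v = 1 := by
    have h1 : ‖hM.eigenvectorBasis i‖ = 1 := hM.eigenvectorBasis.orthonormal.1 i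
    have h2 : (‖hM.eigenvectorBasis i‖ : ℝ)^2 = ∑ j, v j ^ 2 := by
      rw [EuclideanSpace.norm_eq]
      rw [Real.sq_sqrt (by positivity)]
      simp [hvdef]
    rw [dotProduct]
    simp only [sq] at h2
    rw [h1] at h2; simpa [sq] using h2.symm
  have hq := h.dotProduct_mulVec_nonneg v
  have hsub : v ⬝ᵥ ((M - a • 1) *ᵥ v) = v ⬝ᵥ (M *ᵥ v) - a * (v ⬝ᵥ v) := by
    rw [Matrix.sub_mulVec, dotProduct_sub, Matrix.smul_mulVec, Matrix.one_mulVec,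
      dotProduct_smul, smul_eq_mul]
  rw [star_trivial] at hq
  rw [hsub, hnorm] at hq
  have : hM.eigenvalues i = v ⬝ᵥ (M *ᵥ v) := by
    rw [hv]; simp [star_trivial]
  linarith

private lemma ep_det_step {M : Matrix (Fin d) (Fin d) ℝ} (hM : M.PosDef) (v : Fin d → ℝ) :
    (M + vecMulVec v v).det = M.det * (1 + v ⬝ᵥ M⁻¹ *ᵥ v) := by
  rw [vecMulVec_eq Unit, Matrix.det_add_replicateCol_mul_replicateRow (isUnit_iff_ne_zero.mpr hM.det_pos.ne')]
  congr 1
  rw [Matrix.det_unique]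
  simp only [Matrix.add_apply, Matrix.one_apply_eq, Matrix.mul_apply, Matrix.replicateRow_apply,
    Matrix.replicateCol_apply, dotProduct, mulVec, Finset.sum_mul, Finset.mul_sum]
  congr 1
  rw [Finset.sum_comm]
  apply Finset.sum_congr rfl
  intro i _
  apply Finset.sum_congr rfl
  intro j _
  ring

private lemma ep_jensen_log (hd : 0 < d) (f : Fin d → ℝ) (hf : ∀ i, 0 < f i) :
    ∑ i, Real.log (f i) ≤ d * Real.log ((∑ i, f i) / d) := by
  have hd' : (0:ℝ) < d := by exact_mod_cast hd
  have h := (strictConcaveOn_log_Ioi.concaveOn).le_map_sum (t := Finset.univ)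
    (w := fun _ : Fin d => (d:ℝ)⁻¹) (p := f)
    (fun i _ => by positivity)
    (by simp [Finset.card_univ]; field_simp)
    (fun i _ => hf i)
  simp only [smul_eq_mul] at h
  rw [← Finset.mul_sum, ← Finset.mul_sum] at h
  have h2 : (d:ℝ)⁻¹ * ∑ i, f i = (∑ i, f i) / d := by ring
  rw [h2] at h
  calc ∑ i, Real.log (f i) = d * ((d:ℝ)⁻¹ * ∑ i, Real.log (f i)) := by field_simp
    _ ≤ d * Real.log ((∑ i, f i)/d) := by
        apply mul_le_mul_of_nonneg_left h hd'.le

end EllipticalAux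

/-- Elliptical potential lemma (general version). If `Σ₁` is positive definite with all
eigenvalues in `[a,b]` (expressed in the Loewner order as `a•I ⪯ Σ₁ ⪯ b•I`), `‖xₜ‖₂ ≤ 1`,
and `Σ_{t+1} = Σ_t + xₜxₜᵀ`, then
`Σₜ min{1, xₜᵀΣₜ⁻¹xₜ} ≤ 2d log(b/a + T/(a d))`. -/
theorem elliptical_potential (d T : ℕ) (hd : 0 < d) (a b : ℝ) (ha : 0 < a) (hab : a ≤ b)
    (x : Fin T → (Fin d → ℝ)) (hx : ∀ t, Real.sqrt (∑ i, x t i ^ 2) ≤ 1)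
    (Sig : Fin (T + 1) → Matrix (Fin d) (Fin d) ℝ)
    (hlow : (Sig 0 - a • (1 : Matrix (Fin d) (Fin d) ℝ)).PosSemidef)
    (hup : (b • (1 : Matrix (Fin d) (Fin d) ℝ) - Sig 0).PosSemidef)
    (hrec : ∀ t : Fin T, Sig t.succ = Sig t.castSucc + vecMulVec (x t) (x t)) :
    ∑ t : Fin T, min 1 (x t ⬝ᵥ (Sig t.castSucc)⁻¹ *ᵥ x t) ≤
      2 * d * Real.log (b / a + T / (a * d)) := by
  have hd' : (0:ℝ) < d := by exact_mod_cast hd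
  -- positive definiteness of all Sig
  have hPD' : ∀ n (h : n < T + 1), (Sig ⟨n, h⟩).PosDef := by
    intro n
    induction n with
    | zero =>
      intro h
      have heq : Sig 0 = (Sig 0 - a • (1 : Matrix (Fin d) (Fin d) ℝ)) +
          a • (1 : Matrix (Fin d) (Fin d) ℝ) := by abel
      have : (Sig 0).PosDef := heq ▸ Matrix.PosDef.posSemidef_add hlow (ep_pd_smul_one a ha)
      exact this
    | succ n ih =>
      intro h
      have hn : n < T := by omega
      have hr := hrec ⟨n, hn⟩
      have heq : (⟨n + 1, h⟩ : Fin (T + 1)) = (⟨n, hn⟩ : Fin T).succ := rfl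
      rw [heq, hr]
      exact (ih (by omega)).add_posSemidef (ep_psd_vmv _)
  have hPD : ∀ s : Fin (T + 1), (Sig s).PosDef := fun s => by
    have := hPD' s.1 s.2; simpa using this
  -- the quadratic forms
  set u : Fin T → ℝ := fun t => x t ⬝ᵥ (Sig t.castSucc)⁻¹ *ᵥ x t with hu
  have hu0 : ∀ t, 0 ≤ u t := by
    intro t
    have := ((hPD t.castSucc).inv.posSemidef).dotProduct_mulVec_nonneg (x t)
    simpa using this
  -- log-det telescoping
  set L : Fin (T + 1) → ℝ := fun s => Real.log (Sig s).det with hL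
  have hstep : ∀ t : Fin T, L t.succ = L t.castSucc + Real.log (1 + u t) := by
    intro t
    have := ep_det_step (hPD t.castSucc) (x t)
    rw [hL]
    simp only
    rw [hrec t, this, Real.log_mul (hPD t.castSucc).det_pos.ne' (by
      have := hu0 t; positivity)]
  set G : ℕ → ℝ := fun n => L ⟨min n T, by omega⟩ with hG
  have htel : ∑ t : Fin T, Real.log (1 + u t) = L (Fin.last T) - L 0 := by
    have hcong : ∀ t : Fin T, Real.log (1 + u t) = G (t.1 + 1) - G t.1 := by
      intro t
      have ht : t.1 < T := t.isLt
      have h1 : G (t.1 + 1) = L t.succ := by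
        have e : (⟨min (t.1 + 1) T, by omega⟩ : Fin (T + 1)) = t.succ := by
          apply Fin.ext
          simp only [Fin.val_succ]
          omega
        show L ⟨min (t.1 + 1) T, by omega⟩ = L t.succ
        rw [e]
      have h2 : G t.1 = L t.castSucc := by
        have e : (⟨min t.1 T, by omega⟩ : Fin (T + 1)) = t.castSucc := by
          apply Fin.ext
          simp only [Fin.coe_castSucc]
          omega
        show L ⟨min t.1 T, by omega⟩ = L t.castSucc
        rw [e]
      rw [h1, h2, hstep t]; ring
    calc ∑ t : Fin T, Real.log (1 + u t) = ∑ t : Fin T, (G (t.1 + 1) - G t.1) :=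
          Finset.sum_congr rfl fun t _ => hcong t
      _ = ∑ n ∈ Finset.range T, (G (n + 1) - G n) :=
          Fin.sum_univ_eq_sum_range (fun n => G (n + 1) - G n) T
      _ = G T - G 0 := Finset.sum_range_sub G T
      _ = L (Fin.last T) - L 0 := by
          rw [hG]
          congr 1 <;> exact congrArg L (Fin.ext (by simp))
  -- trace bound
  have htr' : ∀ n (h : n < T + 1), (Sig ⟨n, h⟩).trace ≤ b * d + n := by
    intro n
    induction n with
    | zero =>
      intro h
      have h0 := ep_trace_nonneg hup
      rw [Matrix.trace_sub, Matrix.trace_smul, Matrix.trace_one] at h0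
      simp only [smul_eq_mul, Fintype.card_fin] at h0
      have : (Sig ⟨0, h⟩) = Sig 0 := rfl
      rw [this]
      push_cast
      linarith
    | succ n ih =>
      intro h
      have hn : n < T := by omega
      have heq : (⟨n + 1, h⟩ : Fin (T + 1)) = (⟨n, hn⟩ : Fin T).succ := rfl
      have hc : (⟨n, hn⟩ : Fin T).castSucc = (⟨n, Nat.lt_of_succ_lt h⟩ : Fin (T + 1)) := rfl
      rw [heq, hrec ⟨n, hn⟩, Matrix.trace_add, ep_trace_vmv, hc]
      have hx1 : ∑ i, x ⟨n, hn⟩ i ^ 2 ≤ 1 := by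
        have hnn : (0:ℝ) ≤ ∑ i, x ⟨n, hn⟩ i ^ 2 := by positivity
        have := hx ⟨n, hn⟩
        nlinarith [Real.sq_sqrt hnn, Real.sqrt_nonneg (∑ i, x ⟨n, hn⟩ i ^ 2)]
      have := ih (Nat.lt_of_succ_lt h)
      push_cast
      push_cast at this
      linarith
  have htr : (Sig (Fin.last T)).trace ≤ b * d + T := by
    have := htr' T (by omega)
    simpa [Fin.last] using this
  -- upper bound on L (Fin.last T)
  have hH := (hPD (Fin.last T)).isHermitian
  have heigpos := (hPD (Fin.last T)).eigenvalues_pos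
  have hLup : L (Fin.last T) ≤ d * Real.log ((b * d + T) / d) := by
    have hdet : (Sig (Fin.last T)).det = ∏ i, hH.eigenvalues i := by
      simpa using hH.det_eq_prod_eigenvalues
    have hlogdet : L (Fin.last T) = ∑ i, Real.log (hH.eigenvalues i) := by
      rw [hL]; simp only
      rw [hdet, Real.log_prod (fun i _ => (heigpos i).ne')]
    have hjen := ep_jensen_log hd hH.eigenvalues heigpos
    have hsum : ∑ i, hH.eigenvalues i = (Sig (Fin.last T)).trace :=
      (ep_trace_eq_sum_eigen hH).symm
    have hne : Nonempty (Fin d) := ⟨⟨0, hd⟩⟩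
    have hsumpos : 0 < ∑ i, hH.eigenvalues i :=
      Finset.sum_pos (fun i _ => heigpos i) Finset.univ_nonempty
    have hlog2 : Real.log ((∑ i, hH.eigenvalues i) / d) ≤ Real.log ((b * d + T) / d) := by
      apply Real.log_le_log (by positivity)
      gcongr
      rw [hsum]; exact htr
    calc L (Fin.last T) = ∑ i, Real.log (hH.eigenvalues i) := hlogdet
      _ ≤ d * Real.log ((∑ i, hH.eigenvalues i) / d) := hjen
      _ ≤ d * Real.log ((b * d + T) / d) := mul_le_mul_of_nonneg_left hlog2 hd'.le
  -- lower bound on L 0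
  have hH0 := (hPD 0).isHermitian
  have hL0 : (d:ℝ) * Real.log a ≤ L 0 := by
    have hdet0 : (Sig 0).det = ∏ i, hH0.eigenvalues i := by
      simpa using hH0.det_eq_prod_eigenvalues
    have heq0 : L 0 = ∑ i, Real.log (hH0.eigenvalues i) := by
      rw [hL]; simp only
      rw [hdet0, Real.log_prod (fun i _ => ((hPD 0).eigenvalues_pos i).ne')]
    rw [heq0]
    calc (d:ℝ) * Real.log a = ∑ _i : Fin d, Real.log a := by
          rw [Finset.sum_const, Finset.card_univ, Fintype.card_fin, nsmul_eq_mul]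
      _ ≤ ∑ i, Real.log (hH0.eigenvalues i) :=
          Finset.sum_le_sum fun i _ => Real.log_le_log ha (ep_eigen_lb hH0 hlow i)
  -- combine
  have hb : (0:ℝ) < b := lt_of_lt_of_le ha hab
  have hXpos : (0:ℝ) < (b * d + T) / d := by positivity
  have hfin : Real.log ((b * ↑d + ↑T) / ↑d) - Real.log a = Real.log (b / a + ↑T / (a * ↑d)) := by
    rw [← Real.log_div hXpos.ne' ha.ne']
    congr 1
    field_simp
  calc ∑ t : Fin T, min 1 (u t) ≤ ∑ t : Fin T, 2 * Real.log (1 + u t) :=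
        Finset.sum_le_sum fun t _ => ep_min1_le _ (hu0 t)
    _ = 2 * (L (Fin.last T) - L 0) := by rw [← Finset.mul_sum, htel]
    _ ≤ 2 * (d * Real.log ((b * d + T) / d) - d * Real.log a) := by linarith
    _ = 2 * d * (Real.log ((b * ↑d + ↑T) / ↑d) - Real.log a) := by ring
    _ = 2 * d * Real.log (b / a + T / (a * d)) := by rw [hfin]
end

section
/- Log-determinant telescoping bound: For positive definite matrices Σ_t with Σ_{t+1} = Σ_t + x_t x_tᵀ, we have Σ_{t=1}^T x_tᵀ Σ_{t+1}⁻¹ x_t ≤ log(det Σ_{T+1} / det Σ₁). -/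
open Matrix

lemma vecMulVec_posSemidef {d : ℕ} (v : Fin d → ℝ) : (vecMulVec v v).PosSemidef := by
  rw [vecMulVec_eq Unit]
  have h := posSemidef_conjTranspose_mul_self (replicateRow Unit v)
  rwa [conjTranspose_replicateRow, star_trivial] at h

lemma step_ineq {d : ℕ} {B : Matrix (Fin d) (Fin d) ℝ} (hB : B.PosDef) (v : Fin d → ℝ) :
    v ⬝ᵥ (B + vecMulVec v v)⁻¹ *ᵥ v ≤
      Real.log (B + vecMulVec v v).det - Real.log B.det := by
  set c := v ⬝ᵥ B⁻¹ *ᵥ v with hc_def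
  have hc : 0 ≤ c := by
    have := hB.inv.posSemidef.dotProduct_mulVec_nonneg v
    simpa using this
  have h1c : (0:ℝ) < 1 + c := by linarith
  have hBu : IsUnit B.det := isUnit_iff_ne_zero.mpr hB.det_pos.ne'
  have hdet : (B + vecMulVec v v).det = B.det * (1 + c) := by
    rw [vecMulVec_eq Unit, det_add_replicateCol_mul_replicateRow hBu]
    congr 1
    rw [det_unique]
    simp only [Matrix.add_apply, one_apply_eq, mul_apply, replicateRow_apply, replicateCol_apply,
      Finset.univ_unique, Finset.sum_singleton]
    congr 1
    simp only [hc_def, dotProduct, mulVec, dotProduct]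
    simp_rw [Finset.sum_mul, Finset.mul_sum]
    rw [Finset.sum_comm]
    exact Finset.sum_congr rfl fun k _ => Finset.sum_congr rfl fun j _ => by ring
  have hmul : (B + vecMulVec v v) *ᵥ ((1 + c)⁻¹ • (B⁻¹ *ᵥ v)) = v := by
    rw [mulVec_smul, add_mulVec, mulVec_mulVec, mul_nonsing_inv _ hBu, one_mulVec]
    have hvv : vecMulVec v v *ᵥ (B⁻¹ *ᵥ v) = c • v := by
      ext i
      simp only [mulVec, dotProduct, vecMulVec_apply, Pi.smul_apply, smul_eq_mul, hc_def,
        dotProduct]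
      rw [Finset.sum_mul]
      exact Finset.sum_congr rfl fun j _ => by ring
    rw [hvv]
    have : v + c • v = (1 + c) • v := by rw [add_smul, one_smul]
    rw [this, smul_smul, inv_mul_cancel₀ h1c.ne', one_smul]
  have hApd : (B + vecMulVec v v).PosDef := hB.add_posSemidef (vecMulVec_posSemidef v)
  have hAu : IsUnit (B + vecMulVec v v).det := isUnit_iff_ne_zero.mpr hApd.det_pos.ne'
  have hinv : (B + vecMulVec v v)⁻¹ *ᵥ v = (1 + c)⁻¹ • (B⁻¹ *ᵥ v) := by
    have h2 : (B + vecMulVec v v)⁻¹ *ᵥ ((B + vecMulVec v v) *ᵥ ((1 + c)⁻¹ • (B⁻¹ *ᵥ v)))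
        = (1 + c)⁻¹ • (B⁻¹ *ᵥ v) := by
      rw [mulVec_mulVec, nonsing_inv_mul _ hAu, one_mulVec]
    rw [hmul] at h2
    exact h2
  have hlhs : v ⬝ᵥ (B + vecMulVec v v)⁻¹ *ᵥ v = (1 + c)⁻¹ * c := by
    rw [hinv, dotProduct_smul, smul_eq_mul, ← hc_def]
  rw [hlhs, hdet, Real.log_mul hB.det_pos.ne' h1c.ne', add_sub_cancel_left]
  have hlog := Real.log_le_sub_one_of_pos (inv_pos.mpr h1c)
  rw [Real.log_inv] at hlog
  have heq : (1 + c)⁻¹ * c = 1 - (1 + c)⁻¹ := by field_simp; ring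
  linarith

/-- Log-determinant telescoping bound: for positive definite `Σ₁` and
`Σ_{t+1} = Σ_t + xₜxₜᵀ`, we have
`Σₜ xₜᵀ Σ_{t+1}⁻¹ xₜ ≤ log(det Σ_{T+1} / det Σ₁)`. -/
theorem logdet_telescoping (d T : ℕ)
    (x : Fin T → (Fin d → ℝ))
    (Sig : Fin (T + 1) → Matrix (Fin d) (Fin d) ℝ)
    (hpd : (Sig 0).PosDef)
    (hrec : ∀ t : Fin T, Sig t.succ = Sig t.castSucc + vecMulVec (x t) (x t)) :
    ∑ t : Fin T, x t ⬝ᵥ (Sig t.succ)⁻¹ *ᵥ x t ≤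
      Real.log ((Sig (Fin.last T)).det / (Sig 0).det) := by
  have hall : ∀ t : Fin (T + 1), (Sig t).PosDef := by
    intro t
    induction t using Fin.induction with
    | zero => exact hpd
    | succ i ih => rw [hrec i]; exact ih.add_posSemidef (vecMulVec_posSemidef _)
  have key : ∀ t : Fin T, x t ⬝ᵥ (Sig t.succ)⁻¹ *ᵥ x t ≤
      Real.log (Sig t.succ).det - Real.log (Sig t.castSucc).det := by
    intro t
    rw [hrec t]
    exact step_ineq (hall t.castSucc) (x t)
  have htel : ∑ t : Fin T, (Real.log (Sig t.succ).det - Real.log (Sig t.castSucc).det)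
      = Real.log (Sig (Fin.last T)).det - Real.log (Sig 0).det := by
    set f : ℕ → ℝ := fun n => Real.log (Sig ⟨min n T, by omega⟩).det with hf
    have h1 : ∑ t : Fin T, (Real.log (Sig t.succ).det - Real.log (Sig t.castSucc).det)
        = ∑ i ∈ Finset.range T, (f (i + 1) - f i) := by
      rw [Finset.sum_range fun i => f (i + 1) - f i]
      refine Finset.sum_congr rfl fun t _ => ?_
      have h2 : (⟨min (t.1 + 1) T, by omega⟩ : Fin (T + 1)) = t.succ := by
        ext; simp [Nat.min_eq_left t.2]
      have h3 : (⟨min t.1 T, by omega⟩ : Fin (T + 1)) = t.castSucc := by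
        ext; simp [Nat.min_eq_left (le_of_lt t.2)]
      simp only [hf, h2, h3]
    rw [h1, Finset.sum_range_sub]
    have h4 : (⟨min T T, by omega⟩ : Fin (T + 1)) = Fin.last T := by ext; simp
    have h5 : (⟨min 0 T, by omega⟩ : Fin (T + 1)) = 0 := by ext; simp
    simp only [hf, h4, h5]
  rw [Real.log_div (hall (Fin.last T)).det_pos.ne' hpd.det_pos.ne', ← htel]
  exact Finset.sum_le_sum fun t _ => key t
end

section
/- D-optimal design equivalence (Kiefer–Wolfowitz direction): Let Φ ⊆ ℝ^d be compact with span(Φ) = ℝ^d, and for a probability distribution ρ on Φ define Λ(ρ) = E_{φ∼ρ}[φφᵀ] and g(ρ) = max_{φ∈Φ} φᵀΛ(ρ)⁻¹φ. If ρ maximizes log det Λ(ρ), then g(ρ) = d. -/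
open Matrix

lemma kw_trace_mul (d : ℕ) (A : Matrix (Fin d) (Fin d) ℝ) (v : Fin d → ℝ) :
    (A * vecMulVec v v).trace = v ⬝ᵥ A *ᵥ v := by
  simp only [Matrix.trace, Matrix.diag, Matrix.mul_apply, vecMulVec_apply, dotProduct, mulVec,
    Finset.mul_sum]
  exact Finset.sum_congr rfl fun i _ => Finset.sum_congr rfl fun j _ => by ring

lemma kw_vecMulVec_mulVec (d : ℕ) (v x : Fin d → ℝ) :
    vecMulVec v v *ᵥ x = (v ⬝ᵥ x) • v := by
  ext i
  simp only [vecMulVec_apply, mulVec, dotProduct, Pi.smul_apply, smul_eq_mul, Finset.sum_mul,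
    Finset.mul_sum]
  exact Finset.sum_congr rfl fun j _ => by ring

lemma kw_sum_mulVec {ι : Type*} (d : ℕ) (s : Finset ι) (f : ι → Matrix (Fin d) (Fin d) ℝ)
    (x : Fin d → ℝ) : (∑ v ∈ s, f v) *ᵥ x = ∑ v ∈ s, f v *ᵥ x := by
  ext i
  simp only [mulVec, dotProduct, Finset.sum_apply, Matrix.sum_apply, Finset.sum_mul]
  rw [Finset.sum_comm]

lemma kw_dot_sum {ι : Type*} (d : ℕ) (s : Finset ι) (x : Fin d → ℝ) (f : ι → Fin d → ℝ) :
    x ⬝ᵥ (∑ v ∈ s, f v) = ∑ v ∈ s, x ⬝ᵥ f v := by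
  simp only [dotProduct, Finset.sum_apply, Finset.mul_sum]
  rw [Finset.sum_comm]

lemma kw_det_aux (d : ℕ) (A : Matrix (Fin d) (Fin d) ℝ) (hA : IsUnit A.det)
    (a b : ℝ) (ha : a ≠ 0) (φ : Fin d → ℝ) :
    (a • A + b • vecMulVec φ φ).det = a ^ d * A.det * (1 + (b / a) * (φ ⬝ᵥ A⁻¹ *ᵥ φ)) := by
  have hb : b • vecMulVec φ φ = replicateCol (Fin 1) (b • φ) * replicateRow (Fin 1) φ := by
    erw [← vecMulVec_eq (Fin 1)]; ext i j; simp [vecMulVec_apply]; ring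
  have hdet : IsUnit (a • A).det := by
    rw [det_smul]; exact ((Ne.isUnit ha).pow _).mul hA
  haveI : Invertible a := invertibleOfNonzero ha
  have hinv : (a • A)⁻¹ = ⅟a • A⁻¹ := Matrix.inv_smul (A := A) a hA
  have hia : (⅟a : ℝ) = a⁻¹ := invOf_eq_inv a
  have h11 : (1 + replicateRow (Fin 1) φ * (a • A)⁻¹ * replicateCol (Fin 1) (b • φ)).det
      = 1 + (b/a) * (φ ⬝ᵥ A⁻¹ *ᵥ φ) := by
    rw [hinv, det_unique]
    simp only [Pi.add_apply, Matrix.add_apply, Matrix.one_apply_eq, Matrix.mul_apply, replicateRow_apply,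
      replicateCol_apply, Matrix.smul_apply, smul_eq_mul, Pi.smul_apply, dotProduct, mulVec, hia,
      Finset.sum_mul, Finset.mul_sum]
    congr 1
    rw [Finset.sum_comm]
    exact Finset.sum_congr rfl fun i _ => Finset.sum_congr rfl fun j _ => by field_simp
  erw [hb, det_add_replicateCol_mul_replicateRow (ι := Fin 1) hdet, det_smul, Fintype.card_fin]
  rw [mul_assoc, mul_assoc]
  congr 1
  rw [← h11]
  rfl

/-- Kiefer–Wolfowitz direction: if a finitely supported design `ρ` on a compact spanning
set `Φ ⊆ ℝ^d` maximizes `log det Λ(ρ)` (with `Λ(ρ) = Σ_φ ρ(φ) φφᵀ` invertible), then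
`g(ρ) = max_{φ∈Φ} φᵀΛ(ρ)⁻¹φ = d`. -/
theorem kiefer_wolfowitz_direction (d : ℕ) (hd : 0 < d) (Φ : Set (Fin d → ℝ))
    (hcomp : IsCompact Φ) (hspan : Submodule.span ℝ Φ = ⊤)
    (ρ : (Fin d → ℝ) →₀ ℝ)
    (hsupp : ∀ v ∈ ρ.support, v ∈ Φ) (hpos : ∀ v, 0 ≤ ρ v)
    (hsum : ∑ v ∈ ρ.support, ρ v = 1)
    (hmax : ∀ ρ' : (Fin d → ℝ) →₀ ℝ, (∀ v ∈ ρ'.support, v ∈ Φ) → (∀ v, 0 ≤ ρ' v) →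
      (∑ v ∈ ρ'.support, ρ' v = 1) →
      Real.log (∑ v ∈ ρ'.support, ρ' v • vecMulVec v v).det ≤
        Real.log (∑ v ∈ ρ.support, ρ v • vecMulVec v v).det)
    (hinv : IsUnit (∑ v ∈ ρ.support, ρ v • vecMulVec v v).det) :
    IsGreatest
      {x : ℝ | ∃ φ ∈ Φ, x = φ ⬝ᵥ (∑ v ∈ ρ.support, ρ v • vecMulVec v v)⁻¹ *ᵥ φ}
      (d : ℝ) := by
  set Λ : Matrix (Fin d) (Fin d) ℝ := ∑ v ∈ ρ.support, ρ v • vecMulVec v v with hΛ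
  -- quadratic form of Λ
  have hquad : ∀ x, x ⬝ᵥ Λ *ᵥ x = ∑ v ∈ ρ.support, ρ v * (v ⬝ᵥ x) ^ 2 := by
    intro x
    rw [hΛ, kw_sum_mulVec, kw_dot_sum]
    refine Finset.sum_congr rfl fun v _ => ?_
    rw [smul_mulVec, kw_vecMulVec_mulVec, smul_smul, dotProduct_smul, smul_eq_mul,
      dotProduct_comm]
    ring
  -- Λ is hermitian
  have hherm : Λ.IsHermitian := by
    show Λᴴ = Λ
    rw [hΛ]
    ext i j
    simp only [conjTranspose_apply, Matrix.sum_apply, Matrix.smul_apply, vecMulVec_apply,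
      smul_eq_mul, star_trivial]
    exact Finset.sum_congr rfl fun v _ => by ring
  -- Λ is positive semidefinite
  have hpsd : Λ.PosSemidef := by
    refine Matrix.PosSemidef.of_dotProduct_mulVec_nonneg hherm fun x => ?_
    rw [star_trivial, hquad]
    exact Finset.sum_nonneg fun v _ => mul_nonneg (hpos v) (sq_nonneg _)
  -- Λ is positive definite
  have hpd : Λ.PosDef := by
    refine Matrix.PosDef.of_dotProduct_mulVec_pos hherm fun x hx => ?_
    rcases lt_or_eq_of_le (hpsd.dotProduct_mulVec_nonneg x) with h | h
    · exact h
    · exfalso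
      have h0 : Λ *ᵥ x = 0 := (hpsd.dotProduct_mulVec_zero_iff x).mp h.symm
      have : x = 0 := by
        have := congrArg (fun y => Λ⁻¹ *ᵥ y) h0
        simpa [Matrix.mulVec_mulVec, Matrix.nonsing_inv_mul Λ hinv] using this
      exact hx this
  have hdetpos : 0 < Λ.det := hpd.det_pos
  -- trace identity
  have htr : ∑ v ∈ ρ.support, ρ v * (v ⬝ᵥ Λ⁻¹ *ᵥ v) = (d : ℝ) := by
    have h1 : Λ⁻¹ * Λ = 1 := Matrix.nonsing_inv_mul Λ hinv
    have h2 : Λ⁻¹ * Λ = ∑ v ∈ ρ.support, ρ v • (Λ⁻¹ * vecMulVec v v) := by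
      rw [hΛ, Finset.mul_sum]
      exact Finset.sum_congr rfl fun v _ => Matrix.mul_smul _ _ _
    calc ∑ v ∈ ρ.support, ρ v * (v ⬝ᵥ Λ⁻¹ *ᵥ v)
        = ∑ v ∈ ρ.support, (ρ v • (Λ⁻¹ * vecMulVec v v)).trace := by
          refine Finset.sum_congr rfl fun v _ => ?_
          rw [trace_smul, kw_trace_mul, smul_eq_mul]
      _ = (∑ v ∈ ρ.support, ρ v • (Λ⁻¹ * vecMulVec v v)).trace := (trace_sum _ _).symm
      _ = (Λ⁻¹ * Λ).trace := by rw [h2]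
      _ = (d : ℝ) := by rw [h1, trace_one, Fintype.card_fin]
  -- key upper bound
  have key : ∀ φ ∈ Φ, φ ⬝ᵥ Λ⁻¹ *ᵥ φ ≤ (d : ℝ) := by
    intro φ hφ
    by_contra hcon
    push_neg at hcon
    set s : ℝ := φ ⬝ᵥ Λ⁻¹ *ᵥ φ with hs
    obtain ⟨k, rfl⟩ : ∃ k, d = k + 1 := ⟨d - 1, (Nat.succ_pred_eq_of_pos hd).symm⟩
    have hk0 : (0 : ℝ) ≤ (k : ℝ) := Nat.cast_nonneg k
    have hdk : ((k + 1 : ℕ) : ℝ) = (k : ℝ) + 1 := by push_cast; ring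
    have hs1 : (1 : ℝ) < s := by rw [hdk] at hcon; linarith
    set B : ℝ := (k : ℝ) * (s - 1) with hB
    have hB0 : 0 ≤ B := mul_nonneg hk0 (by linarith)
    have hsd : (0 : ℝ) < s - ((k + 1 : ℕ) : ℝ) := by linarith [hcon]
    set t : ℝ := (s - ((k + 1 : ℕ) : ℝ)) / (s - ((k + 1 : ℕ) : ℝ) + B + 1) with ht
    have hden : (0 : ℝ) < s - ((k + 1 : ℕ) : ℝ) + B + 1 := by linarith
    have ht0 : 0 < t := div_pos hsd hden
    have ht1 : t < 1 := by rw [ht, div_lt_one hden]; linarith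
    have h1t : (0 : ℝ) < 1 - t := by linarith
    have hBt : B * t < s - ((k + 1 : ℕ) : ℝ) := by
      rw [ht, mul_div_assoc', div_lt_iff₀ hden]
      nlinarith
    clear_value t
    clear_value B
    clear_value s
    -- the perturbed design
    set ρ' : (Fin (k + 1) → ℝ) →₀ ℝ := (1 - t) • ρ + Finsupp.single φ t with hρ'
    have happ : ∀ v, ρ' v = (1 - t) * ρ v + (if φ = v then t else 0) := by
      intro v
      rw [hρ', Finsupp.add_apply, Finsupp.smul_apply, smul_eq_mul, Finsupp.single_apply]
    set S : Finset (Fin (k + 1) → ℝ) := insert φ ρ.support with hS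
    have hsub : ρ'.support ⊆ S := by
      intro v hv
      rw [Finsupp.mem_support_iff, happ] at hv
      rw [hS, Finset.mem_insert]
      by_contra hc
      push_neg at hc
      obtain ⟨h1, h2⟩ := hc
      rw [Finsupp.notMem_support_iff.mp h2, if_neg (fun h => h1 h.symm)] at hv
      simp at hv
    have H1 : ∀ v ∈ ρ'.support, v ∈ Φ := by
      intro v hv
      rcases Finset.mem_insert.mp (hsub hv) with h | h
      · exact h ▸ hφ
      · exact hsupp v h
    have H2 : ∀ v, 0 ≤ ρ' v := by
      intro v
      rw [happ]
      have h0 : (0:ℝ) ≤ if φ = v then t else 0 := by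
        split_ifs
        · exact le_of_lt ht0
        · exact le_refl 0
      exact add_nonneg (mul_nonneg (by linarith) (hpos v)) h0
    -- sums over S
    have hsumS : ∀ (M : Type) [inst : AddCommMonoid M] (g : (Fin (k+1) → ℝ) → ℝ → M),
        True := fun _ _ _ => trivial
    have hext : ∀ (f : (Fin (k+1) → ℝ) →₀ ℝ) (T : Finset (Fin (k+1) → ℝ)), f.support ⊆ T →
        ∑ v ∈ f.support, f v = ∑ v ∈ T, f v := fun f T hT =>
      Finset.sum_subset hT (fun x _ hx => Finsupp.notMem_support_iff.mp hx)
    have H3 : ∑ v ∈ ρ'.support, ρ' v = 1 := by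
      rw [hext ρ' S hsub]
      have e1 : ∑ v ∈ S, ρ' v
          = ∑ v ∈ S, ((1 - t) * ρ v) + ∑ v ∈ S, (if φ = v then t else 0) := by
        rw [← Finset.sum_add_distrib]
        exact Finset.sum_congr rfl fun v _ => happ v
      have e2 : ∑ v ∈ S, ((1 - t) * ρ v) = (1 - t) := by
        rw [← Finset.mul_sum, ← hext ρ S (Finset.subset_insert _ _), hsum, mul_one]
      have e3 : ∑ v ∈ S, (if φ = v then t else 0) = t := by
        rw [Finset.sum_ite_eq S φ (fun _ => t), if_pos (Finset.mem_insert_self _ _)]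
      rw [e1, e2, e3]; ring
    -- the perturbed matrix
    have hM' : ∑ v ∈ ρ'.support, ρ' v • vecMulVec v v
        = (1 - t) • Λ + t • vecMulVec φ φ := by
      rw [Finset.sum_subset hsub (fun x _ hx => by
        rw [Finsupp.notMem_support_iff.mp hx, zero_smul])]
      have e1 : ∑ v ∈ S, ρ' v • vecMulVec v v
          = ∑ v ∈ S, ((1 - t) * ρ v) • vecMulVec v v
            + ∑ v ∈ S, (if φ = v then t else 0) • vecMulVec v v := by
        rw [← Finset.sum_add_distrib]
        refine Finset.sum_congr rfl fun v _ => ?_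
        rw [happ, add_smul]
      have e2 : ∑ v ∈ S, ((1 - t) * ρ v) • vecMulVec v v = (1 - t) • Λ := by
        calc ∑ v ∈ S, ((1 - t) * ρ v) • vecMulVec v v
            = ∑ v ∈ S, (1 - t) • (ρ v • vecMulVec v v) :=
              Finset.sum_congr rfl fun v _ => mul_smul _ _ _
          _ = (1 - t) • ∑ v ∈ S, ρ v • vecMulVec v v := (Finset.smul_sum).symm
          _ = (1 - t) • Λ := by
              rw [hΛ, Finset.sum_subset (Finset.subset_insert φ ρ.support) (fun x _ hx => by
                rw [Finsupp.notMem_support_iff.mp hx, zero_smul])]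
      have e3 : ∑ v ∈ S, (if φ = v then t else 0) • vecMulVec v v
          = t • vecMulVec φ φ := by
        have : ∀ v, (if φ = v then t else 0) • vecMulVec v v
            = if φ = v then t • vecMulVec v v else 0 := by
          intro v; split <;> simp
        rw [Finset.sum_congr rfl fun v _ => this v,
          Finset.sum_ite_eq S φ (fun v => t • vecMulVec v v),
          if_pos (Finset.mem_insert_self _ _)]
      rw [e1, e2, e3]
    -- determinant of the perturbed matrix
    have hdet' : ((1 - t) • Λ + t • vecMulVec φ φ).det
        = ((1 - t) ^ (k + 1) * (1 + (t / (1 - t)) * s)) * Λ.det := by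
      rw [kw_det_aux (k + 1) Λ hinv (1 - t) t (ne_of_gt h1t) φ, ← hs]
      ring
    have hslt : (0:ℝ) < s := by linarith only [hs1]
    have hcpos : (0:ℝ) < (1 - t) ^ (k + 1) * (1 + (t / (1 - t)) * s) := by
      have : (0:ℝ) < t / (1 - t) := div_pos ht0 h1t
      positivity
    -- use optimality
    have hle := hmax ρ' H1 H2 H3
    rw [hM', hdet'] at hle
    have hc1 : (1 - t) ^ (k + 1) * (1 + (t / (1 - t)) * s) ≤ 1 := by
      rw [Real.log_mul (ne_of_gt hcpos) (ne_of_gt hdetpos)] at hle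
      have hlog : Real.log ((1 - t) ^ (k + 1) * (1 + (t / (1 - t)) * s)) ≤ 0 := by linarith
      exact (Real.log_nonpos_iff hcpos.le).mp hlog
    -- rewrite c
    have hcform : (1 - t) ^ (k + 1) * (1 + (t / (1 - t)) * s)
        = (1 - t) ^ k * ((1 - t) + t * s) := by
      rw [pow_succ]
      field_simp
    -- Bernoulli
    have hbern : 1 - (k : ℝ) * t ≤ (1 - t) ^ k := by
      have := one_add_mul_le_pow (a := -t) (by linarith) k
      have h' : 1 + (k:ℝ) * (-t) = 1 - (k:ℝ) * t := by ring
      have h'' : (1 + -t) = 1 - t := by ring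
      rw [h', h''] at this
      exact this
    have hfac : (0:ℝ) < (1 - t) + t * s := by
      have h := mul_pos ht0 hslt
      linarith only [h1t, h]
    have hlow : (1 - (k:ℝ) * t) * ((1 - t) + t * s) ≤ (1 - t) ^ k * ((1 - t) + t * s) :=
      mul_le_mul_of_nonneg_right hbern (le_of_lt hfac)
    rw [hcform] at hc1
    -- contradiction
    have hfinal : (1 - (k:ℝ) * t) * ((1 - t) + t * s) = 1 + t * ((s - ((k:ℝ)+1)) - B * t) := by
      rw [hB]; ring
    rw [hdk] at hBt hsd
    have hgt : (0:ℝ) < t * ((s - ((k:ℝ)+1)) - B * t) :=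
      mul_pos ht0 (by linarith only [hBt])
    linarith only [hc1, hlow, hfinal, hgt]
  -- membership: some point of Φ attains d
  have hne : ρ.support.Nonempty := by
    by_contra hc
    rw [Finset.not_nonempty_iff_eq_empty] at hc
    rw [hc, Finset.sum_empty] at hsum
    exact one_ne_zero hsum.symm
  have hzero : ∑ v ∈ ρ.support, ρ v * ((d:ℝ) - v ⬝ᵥ Λ⁻¹ *ᵥ v) = 0 := by
    simp only [mul_sub]
    rw [Finset.sum_sub_distrib, ← Finset.sum_mul, hsum, htr, one_mul, sub_self]
  have hallzero : ∀ v ∈ ρ.support, ρ v * ((d:ℝ) - v ⬝ᵥ Λ⁻¹ *ᵥ v) = 0 := by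
    have hnn : ∀ v ∈ ρ.support, 0 ≤ ρ v * ((d:ℝ) - v ⬝ᵥ Λ⁻¹ *ᵥ v) := fun v hv =>
      mul_nonneg (hpos v) (by linarith [key v (hsupp v hv)])
    exact (Finset.sum_eq_zero_iff_of_nonneg hnn).mp hzero
  obtain ⟨v0, hv0⟩ := hne
  have hv0ne : ρ v0 ≠ 0 := Finsupp.mem_support_iff.mp hv0
  have hv0eq : v0 ⬝ᵥ Λ⁻¹ *ᵥ v0 = (d:ℝ) := by
    have := hallzero v0 hv0
    rcases mul_eq_zero.mp this with h | h
    · exact absurd h hv0ne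
    · linarith
  constructor
  · exact ⟨v0, hsupp v0 hv0, hv0eq.symm⟩
  · rintro x ⟨φ, hφ, rfl⟩
    exact key φ hφ
end
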